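/- arXiv:2411.05250 — 8 statements merged into one kernel-verified Lean document; each statement's English description precedes it below -/
import Mathlib

section
/- Let X₁ → X₂ → ⋯ → Xₙ be composable morphisms f₁,…,f_{n-1} in an abelian category, with composite f = f_{n-1}∘⋯∘f₁, and let 0 = C₀ ⊆ C₁ ⊆ ⋯ ⊆ C_{n-1} = C be a chain of monomorphisms. If for each i, Ext¹(C_i/C_{i-1}, f_i) = 0 (i.e., the map Ext¹(C_i/C_{i-1}, X_i) → Ext¹(C_i/C_{i-1}, X_{i+1}) induced by f_i is zero), then Ext¹(C, f) = 0. -/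
/-! Induct along the filtration. A class in `Ext¹(Cₙ₊₁, X₀)` pushed to `Xₙ` restricts to zero
on `Cₙ` by induction, so by the long exact sequence of `0 → Cₙ → Cₙ₊₁ → Cₙ₊₁/Cₙ → 0` it comes
from `Ext¹(Cₙ₊₁/Cₙ, Xₙ)`, where `fₙ` kills it. -/

open CategoryTheory Limits CategoryTheory.Abelian

universe w v u

/-- The composite `f_{n-1} ∘ ⋯ ∘ f₀ : X 0 ⟶ X n` of a chain of composable morphisms. -/
def chainComposite {C : Type u} [Category.{v} C] (X : ℕ → C) (f : ∀ i, X i ⟶ X (i + 1)) :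
    ∀ n, X 0 ⟶ X n
  | 0 => 𝟙 (X 0)
  | n + 1 => chainComposite X f n ≫ f n

namespace CategoryTheory.Abelian.Ext

variable {C : Type u} [Category.{v} C] [Abelian C] [HasExt.{w} C]

theorem comp_mk₀_comp_eq_zero_of_shortExact {S : ShortComplex C} (hS : S.ShortExact)
    {Y Y' Y'' : C} {g : Y ⟶ Y'} {g' : Y' ⟶ Y''} {k : ℕ}
    (hg : ∀ e : Ext S.X₁ Y k, e.comp (mk₀ g) (add_zero k) = 0)
    (hg' : ∀ e : Ext S.X₃ Y' k, e.comp (mk₀ g') (add_zero k) = 0)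
    (e : Ext S.X₂ Y k) : e.comp (mk₀ (g ≫ g')) (add_zero k) = 0 := by
  have hrestrict : (mk₀ S.f).comp (e.comp (mk₀ g) (add_zero k)) (zero_add k) = 0 := by
    rw [← comp_assoc _ _ _ (zero_add k) (add_zero k) (by omega)]
    exact hg _
  obtain ⟨e₃, he₃⟩ := contravariant_sequence_exact₂ hS Y' _ hrestrict
  rw [← mk₀_comp_mk₀, ← comp_assoc _ _ _ (add_zero k) (add_zero 0) (by omega), ← he₃,
    comp_assoc _ _ _ (zero_add k) (add_zero k) (by omega), hg' e₃, comp_zero]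

end CategoryTheory.Abelian.Ext

/-- If `f = fₙ ∘ ⋯ ∘ f₁` is a composite of composable morphisms and
`0 = C₀ ⊆ C₁ ⊆ ⋯ ⊆ Cₙ = C` is a chain of monomorphisms such that
`Ext¹(Cᵢ₊₁/Cᵢ, fᵢ) = 0` for each `i`, then `Ext¹(C, f) = 0`. -/
theorem stmt0 {C : Type u} [Category.{v} C] [Abelian C] [HasExt.{w} C]
    (n : ℕ) (X : ℕ → C) (f : ∀ i, X i ⟶ X (i + 1))
    (Cc : ℕ → C) (ι : ∀ i, Cc i ⟶ Cc (i + 1)) [∀ i, Mono (ι i)]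
    (h0 : IsZero (Cc 0))
    (hv : ∀ i, i < n → ∀ e : Ext (cokernel (ι i)) (X i) 1,
      e.comp (Ext.mk₀ (f i)) (add_zero 1) = 0) :
    ∀ e : Ext (Cc n) (X 0) 1,
      e.comp (Ext.mk₀ (chainComposite X f n)) (add_zero 1) = 0 := by
  induction n with
  | zero =>
    have := h0.projective
    intro e
    rw [Ext.eq_zero_of_projective e, Ext.zero_comp]
  | succ n ih =>
    have hS : (ShortComplex.mk (ι n) (cokernel.π (ι n)) (by simp)).ShortExact :=
      { exact := ShortComplex.exact_cokernel _ }
    exact Ext.comp_mk₀_comp_eq_zero_of_shortExact hS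
      (ih fun i hi => hv i (by omega)) (hv n (by omega))
end

section
/- Let f : X. → Y. be a morphism of split short exact sequences in an abelian category with chosen splittings (r_X, s_X) and (r_Y, s_Y), and let Δ(f) : X₋₁ → Y₁ be the associated connecting map. If Δ(f) extends along f₋₁, i.e., there exists Δ_Y : Y₋₁ → Y₁ with Δ(f) = Δ_Y ∘ f₋₁, then the adjusted splittings (r_X, s_X) on X. and (r_Y + Δ_Y ∘ p_Y, s_Y − i_Y ∘ Δ_Y) on Y. commute with f, i.e., f₁ ∘ r_X = (r_Y + Δ_Y ∘ p_Y) ∘ f₀ and f₀ ∘ s_X = (s_Y − i_Y ∘ Δ_Y) ∘ f₋₁. -/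
open CategoryTheory Limits

universe v u

namespace CategoryTheory.Preadditive

variable {C : Type u} [Category.{v} C] [Preadditive C]

lemma retraction_comp_eq_of_connecting {X₁ X₂ X₃ Y₁ Y₂ Y₃ : C}
    {pX : X₂ ⟶ X₃} {pY : Y₂ ⟶ Y₃} {f₁ : X₁ ⟶ Y₁} {f₀ : X₂ ⟶ Y₂} {fm : X₃ ⟶ Y₃}
    {rX : X₂ ⟶ X₁} {rY : Y₂ ⟶ Y₁} {ΔY : Y₃ ⟶ Y₁}
    (hcomm : f₀ ≫ pY = pX ≫ fm) (hΔ : -(pX ≫ fm ≫ ΔY) = f₀ ≫ rY - rX ≫ f₁) :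
    rX ≫ f₁ = f₀ ≫ (rY + pY ≫ ΔY) := by
  rw [comp_add, ← Category.assoc, hcomm, Category.assoc, ← neg_neg (pX ≫ fm ≫ ΔY), hΔ]
  abel

lemma section_comp_eq_of_connecting {X₂ X₃ Y₁ Y₂ Y₃ : C}
    {iY : Y₁ ⟶ Y₂} {f₀ : X₂ ⟶ Y₂} {fm : X₃ ⟶ Y₃}
    {sX : X₃ ⟶ X₂} {sY : Y₃ ⟶ Y₂} {ΔY : Y₃ ⟶ Y₁}
    (hΔ : (fm ≫ ΔY) ≫ iY = fm ≫ sY - sX ≫ f₀) :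
    sX ≫ f₀ = fm ≫ (sY - ΔY ≫ iY) := by
  rw [comp_sub, ← Category.assoc, hΔ]
  abel

end CategoryTheory.Preadditive

theorem stmt4_general {C : Type u} [Category.{v} C] [Abelian C]
    (S T : ShortComplex C)
    (f₁ : S.X₁ ⟶ T.X₁) (f₀ : S.X₂ ⟶ T.X₂) (fm : S.X₃ ⟶ T.X₃)
    (hcomm₂ : f₀ ≫ T.g = S.g ≫ fm)
    (rX : S.X₂ ⟶ S.X₁) (sX : S.X₃ ⟶ S.X₂)
    (rY : T.X₂ ⟶ T.X₁) (sY : T.X₃ ⟶ T.X₂)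
    (Δf : S.X₃ ⟶ T.X₁)
    (hΔf₁ : -(S.g ≫ Δf) = f₀ ≫ rY - rX ≫ f₁)
    (hΔf₂ : Δf ≫ T.f = fm ≫ sY - sX ≫ f₀)
    (ΔY : T.X₃ ⟶ T.X₁) (hext : Δf = fm ≫ ΔY) :
    rX ≫ f₁ = f₀ ≫ (rY + T.g ≫ ΔY) ∧ sX ≫ f₀ = fm ≫ (sY - ΔY ≫ T.f) := by
  subst hext
  exact ⟨Preadditive.retraction_comp_eq_of_connecting hcomm₂ hΔf₁,
    Preadditive.section_comp_eq_of_connecting hΔf₂⟩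

/-- Downward adjustment of splittings: let `f = (f₁, f₀, fm) : X. ⟶ Y.` be a morphism of
split short exact sequences (encoded as short complexes `S`, `T`) with splittings
`(rX, sX)` and `(rY, sY)`, and let `Δf` be the associated connecting map (characterized by
`−Δf ∘ p_X = r_Y ∘ f₀ − f₁ ∘ r_X` and `i_Y ∘ Δf = s_Y ∘ fm − f₀ ∘ s_X`).  If `Δf`
extends along `fm`, i.e. `Δf = Δ_Y ∘ fm`, then the splittings `(rX, sX)` and
`(rY + Δ_Y ∘ p_Y, sY − i_Y ∘ Δ_Y)` commute with `f`. -/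
theorem stmt4 {C : Type u} [Category.{v} C] [Abelian C]
    (S T : ShortComplex C) (hS : S.ShortExact) (hT : T.ShortExact)
    (f₁ : S.X₁ ⟶ T.X₁) (f₀ : S.X₂ ⟶ T.X₂) (fm : S.X₃ ⟶ T.X₃)
    (hcomm₁ : f₁ ≫ T.f = S.f ≫ f₀) (hcomm₂ : f₀ ≫ T.g = S.g ≫ fm)
    (rX : S.X₂ ⟶ S.X₁) (sX : S.X₃ ⟶ S.X₂)
    (hrX : S.f ≫ rX = 𝟙 S.X₁) (hsX : sX ≫ S.g = 𝟙 S.X₃)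
    (hrsX : rX ≫ S.f + S.g ≫ sX = 𝟙 S.X₂)
    (rY : T.X₂ ⟶ T.X₁) (sY : T.X₃ ⟶ T.X₂)
    (hrY : T.f ≫ rY = 𝟙 T.X₁) (hsY : sY ≫ T.g = 𝟙 T.X₃)
    (hrsY : rY ≫ T.f + T.g ≫ sY = 𝟙 T.X₂)
    (Δf : S.X₃ ⟶ T.X₁)
    (hΔf₁ : -(S.g ≫ Δf) = f₀ ≫ rY - rX ≫ f₁)
    (hΔf₂ : Δf ≫ T.f = fm ≫ sY - sX ≫ f₀)
    (ΔY : T.X₃ ⟶ T.X₁) (hext : Δf = fm ≫ ΔY) :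
    rX ≫ f₁ = f₀ ≫ (rY + T.g ≫ ΔY) ∧ sX ≫ f₀ = fm ≫ (sY - ΔY ≫ T.f) :=
  stmt4_general S T f₁ f₀ fm hcomm₂ rX sX rY sY Δf hΔf₁ hΔf₂ ΔY hext
end

section
/- Let g : Y. → Z. and f : X. → Y. be composable morphisms of split short exact sequences in an abelian category, with fixed splittings on X., Y., and Z.. Then the connecting maps satisfy the derivation rule Δ(g ∘ f) = Δ(g) ∘ f₋₁ + g₁ ∘ Δ(f). -/
open CategoryTheory Limits

universe v u

/-! The connecting map is determined by its composite with the split monomorphism `i_Z`, and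
that composite is the defect `f₋₁ ≫ s_Y - s_X ≫ f₀` of the morphism from commuting with the
chosen sections. This defect obeys the Leibniz rule on composites. -/

namespace CategoryTheory.Preadditive

variable {C : Type u} [Category.{v} C] [Preadditive C]

def sectionDefect {X₂ X₃ Y₂ Y₃ : C} (sX : X₃ ⟶ X₂) (sY : Y₃ ⟶ Y₂)
    (f₀ : X₂ ⟶ Y₂) (fm : X₃ ⟶ Y₃) : X₃ ⟶ Y₂ :=
  fm ≫ sY - sX ≫ f₀

lemma sectionDefect_comp {X₂ X₃ Y₂ Y₃ Z₂ Z₃ : C} (sX : X₃ ⟶ X₂) (sY : Y₃ ⟶ Y₂)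
    (sZ : Z₃ ⟶ Z₂) (f₀ : X₂ ⟶ Y₂) (fm : X₃ ⟶ Y₃) (g₀ : Y₂ ⟶ Z₂) (gm : Y₃ ⟶ Z₃) :
    sectionDefect sX sZ (f₀ ≫ g₀) (fm ≫ gm) =
      fm ≫ sectionDefect sY sZ g₀ gm + sectionDefect sX sY f₀ fm ≫ g₀ := by
  simp only [sectionDefect, comp_sub, sub_comp, Category.assoc]
  abel

end CategoryTheory.Preadditive

open Preadditive

theorem stmt5_general {C : Type u} [Category.{v} C] [Abelian C]
    (S T U : ShortComplex C)
    (f₀ : S.X₂ ⟶ T.X₂) (fm : S.X₃ ⟶ T.X₃)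
    (g₁ : T.X₁ ⟶ U.X₁) (g₀ : T.X₂ ⟶ U.X₂) (gm : T.X₃ ⟶ U.X₃)
    (hgcomm₁ : g₁ ≫ U.f = T.f ≫ g₀)
    (sX : S.X₃ ⟶ S.X₂)
    (sY : T.X₃ ⟶ T.X₂)
    (rZ : U.X₂ ⟶ U.X₁) (sZ : U.X₃ ⟶ U.X₂)
    (hrZ : U.f ≫ rZ = 𝟙 U.X₁)
    (Δf : S.X₃ ⟶ T.X₁)
    (hΔf₂ : Δf ≫ T.f = fm ≫ sY - sX ≫ f₀)
    (Δg : T.X₃ ⟶ U.X₁)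
    (hΔg₂ : Δg ≫ U.f = gm ≫ sZ - sY ≫ g₀)
    (Δgf : S.X₃ ⟶ U.X₁)
    (hΔgf₂ : Δgf ≫ U.f = (fm ≫ gm) ≫ sZ - sX ≫ (f₀ ≫ g₀)) :
    Δgf = fm ≫ Δg + Δf ≫ g₁ := by
  have : Mono U.f := (SplitMono.mk rZ hrZ).mono
  rw [← cancel_mono U.f]
  calc Δgf ≫ U.f = sectionDefect sX sZ (f₀ ≫ g₀) (fm ≫ gm) := hΔgf₂
    _ = fm ≫ sectionDefect sY sZ g₀ gm + sectionDefect sX sY f₀ fm ≫ g₀ :=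
      sectionDefect_comp sX sY sZ f₀ fm g₀ gm
    _ = fm ≫ Δg ≫ U.f + (Δf ≫ T.f) ≫ g₀ := by rw [sectionDefect, sectionDefect, hΔg₂, hΔf₂]
    _ = (fm ≫ Δg + Δf ≫ g₁) ≫ U.f := by
      rw [add_comp, Category.assoc, Category.assoc, Category.assoc, hgcomm₁]

/-- Derivation rule for connecting maps: given composable morphisms
`f : X. ⟶ Y.` and `g : Y. ⟶ Z.` of split short exact sequences (encoded as short
complexes `S`, `T`, `U`) with fixed splittings, and connecting maps `Δf`, `Δg`, `Δgf`
characterized by the usual equations, one has `Δ(g∘f) = Δ(g) ∘ f₋₁ + g₁ ∘ Δ(f)`. -/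
theorem stmt5 {C : Type u} [Category.{v} C] [Abelian C]
    (S T U : ShortComplex C) (hS : S.ShortExact) (hT : T.ShortExact) (hU : U.ShortExact)
    (f₁ : S.X₁ ⟶ T.X₁) (f₀ : S.X₂ ⟶ T.X₂) (fm : S.X₃ ⟶ T.X₃)
    (hfcomm₁ : f₁ ≫ T.f = S.f ≫ f₀) (hfcomm₂ : f₀ ≫ T.g = S.g ≫ fm)
    (g₁ : T.X₁ ⟶ U.X₁) (g₀ : T.X₂ ⟶ U.X₂) (gm : T.X₃ ⟶ U.X₃)
    (hgcomm₁ : g₁ ≫ U.f = T.f ≫ g₀) (hgcomm₂ : g₀ ≫ U.g = T.g ≫ gm)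
    (rX : S.X₂ ⟶ S.X₁) (sX : S.X₃ ⟶ S.X₂)
    (hrX : S.f ≫ rX = 𝟙 S.X₁) (hsX : sX ≫ S.g = 𝟙 S.X₃)
    (hrsX : rX ≫ S.f + S.g ≫ sX = 𝟙 S.X₂)
    (rY : T.X₂ ⟶ T.X₁) (sY : T.X₃ ⟶ T.X₂)
    (hrY : T.f ≫ rY = 𝟙 T.X₁) (hsY : sY ≫ T.g = 𝟙 T.X₃)
    (hrsY : rY ≫ T.f + T.g ≫ sY = 𝟙 T.X₂)
    (rZ : U.X₂ ⟶ U.X₁) (sZ : U.X₃ ⟶ U.X₂)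
    (hrZ : U.f ≫ rZ = 𝟙 U.X₁) (hsZ : sZ ≫ U.g = 𝟙 U.X₃)
    (hrsZ : rZ ≫ U.f + U.g ≫ sZ = 𝟙 U.X₂)
    (Δf : S.X₃ ⟶ T.X₁)
    (hΔf₁ : -(S.g ≫ Δf) = f₀ ≫ rY - rX ≫ f₁)
    (hΔf₂ : Δf ≫ T.f = fm ≫ sY - sX ≫ f₀)
    (Δg : T.X₃ ⟶ U.X₁)
    (hΔg₁ : -(T.g ≫ Δg) = g₀ ≫ rZ - rY ≫ g₁)
    (hΔg₂ : Δg ≫ U.f = gm ≫ sZ - sY ≫ g₀)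
    (Δgf : S.X₃ ⟶ U.X₁)
    (hΔgf₁ : -(S.g ≫ Δgf) = (f₀ ≫ g₀) ≫ rZ - rX ≫ (f₁ ≫ g₁))
    (hΔgf₂ : Δgf ≫ U.f = (fm ≫ gm) ≫ sZ - sX ≫ (f₀ ≫ g₀)) :
    Δgf = fm ≫ Δg + Δf ≫ g₁ :=
  stmt5_general S T U f₀ fm g₁ g₀ gm hgcomm₁ sX sY rZ sZ hrZ Δf hΔf₂ Δg hΔg₂ Δgf hΔgf₂
end

section
/- Let J be an ideal of morphisms in an additive category (closed under addition and under pre- and post-composition with arbitrary morphisms) in which the relevant colimits exist. For any two ordinals α and β, the product ideal J^{(α)} · J^{(β)} equals J^{(β+α)}, where J^{(λ)} denotes the λ-th inductive power of J. -/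
open CategoryTheory Limits

universe w v u

namespace CategoryTheory

/-- The `λ`-th inductive power of an ideal `J` of morphisms: `g` belongs to `J^{(λ)}` iff
`g = h ∘ a⁰_λ` (up to an isomorphism identifying the source), where `a⁰_λ : A 0 ⟶ A λ` is
the transfinite composition of a continuous `λ`-system `(A α, a α β)` all of whose
successor maps `a α (α+1)` (for `α < λ`) lie in `J`; continuity means that at every limit
ordinal `β ≤ λ`, the object `A β` together with the maps `a α β` (for `α < β`) is a colimit
of the preceding system. -/
def MorphismProperty.InductivePower {C : Type u} [Category.{v} C]
    (J : MorphismProperty C) (lam : Ordinal.{w}) : MorphismProperty C := fun X Y g =>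
  ∃ (A : Ordinal.{w} → C) (a : ∀ α β : Ordinal.{w}, α ≤ β → (A α ⟶ A β)),
    (∀ α, a α α le_rfl = 𝟙 (A α)) ∧
    (∀ (α β γ : Ordinal.{w}) (h₁ : α ≤ β) (h₂ : β ≤ γ),
        a α β h₁ ≫ a β γ h₂ = a α γ (h₁.trans h₂)) ∧
    (∀ α : Ordinal.{w}, α < lam → J (a α (α + 1) (le_self_add))) ∧
    (∀ β : Ordinal.{w}, β ≤ lam → Order.IsSuccLimit β →
      ∀ (W : C) (c : ∀ α : Ordinal.{w}, α < β → (A α ⟶ W)),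
        (∀ (α α' : Ordinal.{w}) (h : α ≤ α') (h' : α' < β),
            a α α' h ≫ c α' h' = c α (lt_of_le_of_lt h h')) →
        ∃! t : A β ⟶ W, ∀ (α : Ordinal.{w}) (h : α < β), a α β h.le ≫ t = c α h) ∧
    ∃ (e : X ≅ A 0) (h : A lam ⟶ Y),
      g = e.hom ≫ a 0 lam (zero_le (a := lam)) ≫ h

/-- The product `P · Q` of two ideals of morphisms: it consists of all composites
`i ∘ j` with `j ∈ Q` and `i ∈ P` composable. -/
def MorphismProperty.IdealProd {C : Type u} [Category.{v} C]
    (P Q : MorphismProperty C) : MorphismProperty C := fun X Z g =>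
  ∃ (Y : C) (j : X ⟶ Y) (i : Y ⟶ Z), Q j ∧ P i ∧ g = j ≫ i

end CategoryTheory

/-!
A chain witnessing `j ∈ J^{(β)}` followed by one witnessing `i ∈ J^{(α)}`, glued along the map
joining them, witnesses `j ≫ i ∈ J^{(β+α)}`: the gluing map becomes the successor step
`β → β + 1`, and it lies in `J` because `J` is an ideal. Conversely a chain of length `β + α`
splits at `β` into a chain of length `β` and its tail, a chain of length `α`. Continuity
survives both operations because a colimit over `γ < β + x` only depends on the cofinal part
`γ ≥ β`.
-/

namespace CategoryTheory

open Ordinal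

/-- A functor from the ordinals to `C`, unbundled exactly as the chains in `InductivePower`,
so that `MorphismProperty.inductivePower_iff` is a mere repackaging. -/
structure OrdinalChain (C : Type u) [Category.{v} C] where
  obj : Ordinal.{w} → C
  map : ∀ γ δ : Ordinal.{w}, γ ≤ δ → (obj γ ⟶ obj δ)
  map_id : ∀ γ, map γ γ le_rfl = 𝟙 (obj γ)
  map_comp : ∀ (γ δ ε : Ordinal.{w}) (h₁ : γ ≤ δ) (h₂ : δ ≤ ε),
    map γ δ h₁ ≫ map δ ε h₂ = map γ ε (h₁.trans h₂)

namespace OrdinalChain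

variable {C : Type u} [Category.{v} C]

section

variable (F : OrdinalChain.{w} C)

lemma map_comp_assoc {γ δ ε : Ordinal.{w}} (h₁ : γ ≤ δ) (h₂ : δ ≤ ε) {W : C}
    (f : F.obj ε ⟶ W) : F.map γ δ h₁ ≫ F.map δ ε h₂ ≫ f = F.map γ ε (h₁.trans h₂) ≫ f := by
  rw [← Category.assoc, F.map_comp]

def IsColimitAt (δ : Ordinal.{w}) : Prop :=
  ∀ (W : C) (c : ∀ γ : Ordinal.{w}, γ < δ → (F.obj γ ⟶ W)),
    (∀ (γ γ' : Ordinal.{w}) (h : γ ≤ γ') (h' : γ' < δ),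
        F.map γ γ' h ≫ c γ' h' = c γ (lt_of_le_of_lt h h')) →
    ∃! t : F.obj δ ⟶ W, ∀ (γ : Ordinal.{w}) (h : γ < δ), F.map γ δ h.le ≫ t = c γ h

lemma map_congr {γ γ' δ δ' : Ordinal.{w}} (hγ : γ = γ') (hδ : δ = δ') (h : γ ≤ δ)
    (h' : γ' ≤ δ') :
    F.map γ δ h =
      eqToHom (congrArg F.obj hγ) ≫ F.map γ' δ' h' ≫ eqToHom (congrArg F.obj hδ.symm) := by
  subst hγ hδ; simp

lemma map_mem_of_eq (P : MorphismProperty C) {γ δ δ' : Ordinal.{w}} (e : δ = δ')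
    (h : γ ≤ δ) (h' : γ ≤ δ') (hP : P (F.map γ δ h)) : P (F.map γ δ' h') := by
  subst e; exact hP

abbrev shift (β : Ordinal.{w}) : OrdinalChain.{w} C where
  obj u := F.obj (β + u)
  map u v h := F.map (β + u) (β + v) (add_le_add_right h β)
  map_id u := F.map_id (β + u)
  map_comp _ _ _ _ _ := F.map_comp _ _ _ _ _

/-- A cocone over the `γ < β + x` is recovered from its restriction to the `β + u` through
`γ ≤ β + (γ - β)`. -/
theorem isColimitAt_add_iff {β x : Ordinal.{w}} (hx : x ≠ 0) :
    F.IsColimitAt (β + x) ↔ (F.shift β).IsColimitAt x := by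
  have hsub : ∀ γ, γ < β + x → γ - β < x := fun γ hγ =>
    Ordinal.sub_lt_of_lt_add hγ (pos_iff_ne_zero.mpr hx)
  constructor
  · intro hF W c hc
    let c' : ∀ γ, γ < β + x → (F.obj γ ⟶ W) := fun γ hγ =>
      F.map γ (β + (γ - β)) (le_add_sub γ β) ≫ c (γ - β) (hsub γ hγ)
    have hc' : ∀ γ (hγ : γ < β + x) (t : F.obj (β + x) ⟶ W),
        (∀ u (hu : u < x), F.map (β + u) (β + x) (add_le_add_right hu.le β) ≫ t = c u hu) →
        F.map γ (β + x) hγ.le ≫ t = c' γ hγ := fun γ hγ t ht => by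
      rw [← F.map_comp γ (β + (γ - β)) (β + x) (le_add_sub γ β)
        (add_le_add_right (hsub γ hγ).le β), Category.assoc, ht]
    obtain ⟨t, ht, huniq⟩ := hF W c' fun γ γ' h h' => by
      dsimp only [c']
      have hsub_le : γ - β ≤ γ' - β := Ordinal.sub_le.mpr (h.trans (le_add_sub γ' β))
      rw [F.map_comp_assoc h (le_add_sub γ' β),
        ← F.map_comp_assoc (le_add_sub γ β) (add_le_add_right hsub_le β)]
      exact congrArg _ (hc _ _ hsub_le (hsub γ' h'))
    refine ⟨t, fun u hu => ?_, fun t' ht' => huniq t' fun γ hγ => hc' γ hγ t' ht'⟩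
    rw [ht _ ((add_lt_add_iff_left β).mpr hu)]
    exact hc u (β + u - β) (by rw [Ordinal.add_sub_cancel]) _
  · intro hF W c hc
    obtain ⟨t, ht, huniq⟩ : ∃! t : F.obj (β + x) ⟶ W, ∀ u (hu : u < x),
        F.map (β + u) (β + x) (add_le_add_right hu.le β) ≫ t =
          c (β + u) ((add_lt_add_iff_left β).mpr hu) :=
      hF W (fun u hu => c (β + u) ((add_lt_add_iff_left β).mpr hu)) fun u u' h h' => hc _ _ _ _
    refine ⟨t, fun γ hγ => ?_, fun t' ht' => huniq t' fun u hu => ht' _ _⟩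
    rw [← F.map_comp γ (β + (γ - β)) (β + x) (le_add_sub γ β)
      (add_le_add_right (hsub γ hγ).le β), Category.assoc, ht (γ - β) (hsub γ hγ), hc]

end

theorem IsColimitAt.of_iso {F G : OrdinalChain.{w} C} {δ : Ordinal.{w}}
    (φ : ∀ γ, γ ≤ δ → (F.obj γ ≅ G.obj γ))
    (hφ : ∀ γ γ' (h : γ ≤ γ') (h' : γ' ≤ δ),
      F.map γ γ' h ≫ (φ γ' h').hom = (φ γ (h.trans h')).hom ≫ G.map γ γ' h)
    (hF : F.IsColimitAt δ) : G.IsColimitAt δ := by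
  intro W c hc
  obtain ⟨t, ht, huniq⟩ := hF W (fun γ hγ => (φ γ hγ.le).hom ≫ c γ hγ) fun γ γ' h h' => by
    rw [reassoc_of% (hφ γ γ' h h'.le), hc]
  refine ⟨(φ δ le_rfl).inv ≫ t, fun γ hγ => ?_, fun t' ht' => ?_⟩
  · have hφ_inv : G.map γ δ hγ.le ≫ (φ δ le_rfl).inv = (φ γ hγ.le).inv ≫ F.map γ δ hγ.le := by
      rw [Iso.comp_inv_eq, Category.assoc, hφ, Iso.inv_hom_id_assoc]
    rw [reassoc_of% hφ_inv, ht, Iso.inv_hom_id_assoc]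
  · rw [Iso.eq_inv_comp]
    exact huniq _ fun γ hγ => by rw [reassoc_of% (hφ γ δ hγ.le le_rfl), ht']

theorem IsColimitAt.of_iso_of_lt {F G : OrdinalChain.{w} C} {β δ : Ordinal.{w}} (hβ : β < δ)
    (φ : ∀ γ, β ≤ γ → γ ≤ δ → (F.obj γ ≅ G.obj γ))
    (hφ : ∀ γ γ' (hγ : β ≤ γ) (h : γ ≤ γ') (h' : γ' ≤ δ),
      F.map γ γ' h ≫ (φ γ' (hγ.trans h) h').hom = (φ γ hγ (h.trans h')).hom ≫ G.map γ γ' h)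
    (hF : F.IsColimitAt δ) : G.IsColimitAt δ := by
  obtain ⟨x, rfl⟩ := exists_add_of_le hβ.le
  have hx : x ≠ 0 := by rintro rfl; simp at hβ
  rw [isColimitAt_add_iff _ hx] at hF ⊢
  exact hF.of_iso (fun u hu => φ (β + u) le_self_add (add_le_add_right hu β))
    fun u u' h h' => hφ _ _ le_self_add _ _

section Splice

variable (F G : OrdinalChain.{w} C) (β : Ordinal.{w}) (k : F.obj β ⟶ G.obj 0)

noncomputable def splice : OrdinalChain.{w} C where
  obj γ := if γ ≤ β then F.obj γ else G.obj (γ - β)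
  map γ δ h :=
    if hδ : δ ≤ β then
      eqToHom (if_pos (h.trans hδ)) ≫ F.map γ δ h ≫ eqToHom (if_pos hδ).symm
    else if hγ : γ ≤ β then
      eqToHom (if_pos hγ) ≫ F.map γ β hγ ≫ k ≫ G.map 0 (δ - β) (zero_le (a := δ - β)) ≫
        eqToHom (if_neg hδ).symm
    else
      eqToHom (if_neg hγ) ≫
        G.map (γ - β) (δ - β) (Ordinal.sub_le.mpr (h.trans (le_add_sub δ β))) ≫
          eqToHom (if_neg hδ).symm
  map_id γ := by
    by_cases hγ : γ ≤ β
    · simp [hγ, F.map_id]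
    · simp [hγ, G.map_id]
  map_comp γ δ ε h₁ h₂ := by
    by_cases hε : ε ≤ β
    · simp [hε, h₂.trans hε, F.map_comp_assoc]
    by_cases hδ : δ ≤ β
    · simp [hε, hδ, h₁.trans hδ, F.map_comp_assoc]
    by_cases hγ : γ ≤ β
    · simp [hε, hδ, hγ, G.map_comp_assoc]
    · simp [hε, hδ, hγ, G.map_comp_assoc]

variable {F G β k}

lemma splice_obj_of_le {γ : Ordinal.{w}} (hγ : γ ≤ β) : (F.splice G β k).obj γ = F.obj γ :=
  if_pos hγ

lemma splice_obj_add {v : Ordinal.{w}} (hv : v ≠ 0) :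
    (F.splice G β k).obj (β + v) = G.obj v := by
  simp [splice, hv]

lemma splice_map_of_le {γ δ : Ordinal.{w}} (h : γ ≤ δ) (hδ : δ ≤ β) :
    (F.splice G β k).map γ δ h =
      eqToHom (splice_obj_of_le (h.trans hδ)) ≫ F.map γ δ h ≫
        eqToHom (splice_obj_of_le hδ).symm :=
  dif_pos hδ

lemma splice_map_add {γ v : Ordinal.{w}} (hγ : γ ≤ β) (hv : v ≠ 0) (h : γ ≤ β + v) :
    (F.splice G β k).map γ (β + v) h =
      eqToHom (splice_obj_of_le hγ) ≫ F.map γ β hγ ≫ k ≫ G.map 0 v (zero_le (a := v)) ≫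
        eqToHom (splice_obj_add hv).symm := by
  have hv' : ¬β + v ≤ β := by simpa using hv
  simp only [splice, dif_neg hv', dif_pos hγ]
  rw [G.map_congr rfl (Ordinal.add_sub_cancel β v) _ (zero_le (a := v))]
  simp

lemma splice_map_add_add {u v : Ordinal.{w}} (hu : u ≠ 0) (hv : v ≠ 0) (h : β + u ≤ β + v) :
    (F.splice G β k).map (β + u) (β + v) h =
      eqToHom (splice_obj_add hu) ≫ G.map u v (le_of_add_le_add_left h) ≫
        eqToHom (splice_obj_add hv).symm := by
  have hu' : ¬β + u ≤ β := by simpa using hu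
  have hv' : ¬β + v ≤ β := by simpa using hv
  simp only [splice, dif_neg hu', dif_neg hv']
  rw [G.map_congr (Ordinal.add_sub_cancel β u) (Ordinal.add_sub_cancel β v) _
    (le_of_add_le_add_left h)]
  simp

lemma splice_map_succ_mem {J : MorphismProperty C}
    (hpost : ∀ ⦃X Y Z : C⦄ (f : X ⟶ Y) (g : Y ⟶ Z), J f → J (f ≫ g))
    (hpre : ∀ ⦃X Y Z : C⦄ (f : X ⟶ Y) (g : Y ⟶ Z), J g → J (f ≫ g)) {α : Ordinal.{w}}
    (hF : ∀ γ < β, J (F.map γ (γ + 1) le_self_add))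
    (hG : ∀ u < α, J (G.map u (u + 1) le_self_add)) {γ : Ordinal.{w}} (hγ : γ < β + α) :
    J ((F.splice G β k).map γ (γ + 1) le_self_add) := by
  by_cases hγβ : γ < β
  · rw [splice_map_of_le _ (Order.add_one_le_of_lt hγβ)]
    exact hpre _ _ (hpost _ _ (hF γ hγβ))
  obtain ⟨u, rfl⟩ := exists_add_of_le (not_lt.mp hγβ)
  have hu : u < α := (add_lt_add_iff_left β).mp hγ
  refine (F.splice G β k).map_mem_of_eq J (add_assoc β u 1).symm
    (add_le_add_right le_self_add β) _ ?_
  rcases eq_or_ne u 0 with rfl | hu0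
  · rw [splice_map_add (v := 0 + 1) (add_zero β).le (by simp)]
    exact hpre _ _ (hpre _ _ (hpre _ _ (hpost _ _ (hG 0 hu))))
  · rw [splice_map_add_add hu0 (add_pos_of_right zero_lt_one u).ne']
    exact hpre _ _ (hpost _ _ (hG u hu))

lemma splice_isColimitAt {α δ : Ordinal.{w}} (hδ : δ ≤ β + α) (hδlim : Order.IsSuccLimit δ)
    (hF : ∀ δ ≤ β, Order.IsSuccLimit δ → F.IsColimitAt δ)
    (hG : ∀ x ≤ α, Order.IsSuccLimit x → G.IsColimitAt x) :
    (F.splice G β k).IsColimitAt δ := by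
  by_cases hδβ : δ ≤ β
  · exact (hF δ hδβ hδlim).of_iso (fun γ hγ => eqToIso (splice_obj_of_le (hγ.trans hδβ)).symm)
      fun γ γ' h h' => by simp [splice_map_of_le h (h'.trans hδβ)]
  obtain ⟨x, rfl⟩ := exists_add_of_le (le_of_not_ge hδβ)
  have hx : Order.IsSuccLimit x := by
    rcases isSuccLimit_add_iff.mp hδlim with hx | ⟨rfl, -⟩
    · exact hx
    · simp at hδβ
  rw [isColimitAt_add_iff _ hx.ne_bot]
  refine (hG x (le_of_add_le_add_left hδ) hx).of_iso_of_lt (one_lt_of_isSuccLimit hx)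
    (fun u hu _ => eqToIso (splice_obj_add (k := k) (zero_lt_one.trans_le hu).ne').symm)
    fun u u' hu h h' => ?_
  simp [splice_map_add_add (zero_lt_one.trans_le hu).ne' (zero_lt_one.trans_le (hu.trans h)).ne']

end Splice

end OrdinalChain

namespace MorphismProperty

open OrdinalChain

variable {C : Type u} [Category.{v} C] {J : MorphismProperty C}

theorem inductivePower_iff {lam : Ordinal.{w}} {X Y : C} (g : X ⟶ Y) :
    J.InductivePower lam g ↔ ∃ F : OrdinalChain.{w} C,
      (∀ γ < lam, J (F.map γ (γ + 1) le_self_add)) ∧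
      (∀ δ ≤ lam, Order.IsSuccLimit δ → F.IsColimitAt δ) ∧
      ∃ (e : X ≅ F.obj 0) (h : F.obj lam ⟶ Y),
        g = e.hom ≫ F.map 0 lam (zero_le (a := lam)) ≫ h :=
  ⟨fun ⟨A, a, hid, hcomp, hsucc, hlim, rest⟩ => ⟨⟨A, a, hid, hcomp⟩, hsucc, hlim, rest⟩,
    fun ⟨⟨A, a, hid, hcomp⟩, hsucc, hlim, rest⟩ => ⟨A, a, hid, hcomp, hsucc, hlim, rest⟩⟩

theorem idealProd_inductivePower_le
    (hpost : ∀ ⦃X Y Z : C⦄ (f : X ⟶ Y) (g : Y ⟶ Z), J f → J (f ≫ g))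
    (hpre : ∀ ⦃X Y Z : C⦄ (f : X ⟶ Y) (g : Y ⟶ Z), J g → J (f ≫ g)) (α β : Ordinal.{w}) :
    (J.InductivePower α).IdealProd (J.InductivePower β) ≤ J.InductivePower (β + α) := by
  rintro X Z _ ⟨Y, j, i, hj, hi, rfl⟩
  obtain ⟨F, hFsucc, hFlim, eF, hF, rfl⟩ := (inductivePower_iff j).mp hj
  rcases eq_or_ne α 0 with rfl | hα
  · rw [add_zero]
    exact (inductivePower_iff _).mpr ⟨F, hFsucc, hFlim, eF, hF ≫ i, by simp⟩
  obtain ⟨G, hGsucc, hGlim, eG, hG, rfl⟩ := (inductivePower_iff i).mp hi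
  refine (inductivePower_iff _).mpr ⟨F.splice G β (hF ≫ eG.hom),
    fun γ hγ => splice_map_succ_mem hpost hpre hFsucc hGsucc hγ,
    fun δ hδ hδlim => splice_isColimitAt hδ hδlim hFlim hGlim,
    eF ≪≫ eqToIso (splice_obj_of_le (zero_le (a := β))).symm,
    eqToHom (splice_obj_add hα) ≫ hG, ?_⟩
  simp [splice_map_add (zero_le (a := β)) hα]

theorem inductivePower_add_le_idealProd (α β : Ordinal.{w}) :
    J.InductivePower (β + α) ≤ (J.InductivePower α).IdealProd (J.InductivePower β) := by
  intro X Z _ hg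
  obtain ⟨F, hsucc, hlim, e, h, rfl⟩ := (inductivePower_iff _).mp hg
  refine ⟨F.obj β, e.hom ≫ F.map 0 β (zero_le (a := β)), F.map β (β + α) le_self_add ≫ h,
    (inductivePower_iff _).mpr ⟨F, fun γ hγ => hsucc γ (hγ.trans_le le_self_add),
      fun δ hδ => hlim δ (hδ.trans le_self_add), e, 𝟙 _, by simp⟩,
    (inductivePower_iff _).mpr ⟨F.shift β, fun u hu => ?_, fun x hx hxlim => ?_,
      eqToIso (congrArg F.obj (add_zero β).symm), h, ?_⟩, by simp [F.map_comp_assoc]⟩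
  · exact F.map_mem_of_eq J (add_assoc β u 1) _ _
      (hsucc (β + u) ((add_lt_add_iff_left β).mpr hu))
  · exact (F.isColimitAt_add_iff hxlim.ne_bot).mp
      (hlim (β + x) (add_le_add_right hx β) (isSuccLimit_add β hxlim))
  · simp [F.map_congr (add_zero β).symm rfl le_self_add]

end MorphismProperty

end CategoryTheory

theorem stmt8_general {C : Type u} [Category.{v} C]
    (J : MorphismProperty C)
    (hpost : ∀ ⦃X Y Z : C⦄ (f : X ⟶ Y) (g : Y ⟶ Z), J f → J (f ≫ g))
    (hpre : ∀ ⦃X Y Z : C⦄ (f : X ⟶ Y) (g : Y ⟶ Z), J g → J (f ≫ g))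
    (α β : Ordinal.{w}) :
    (J.InductivePower α).IdealProd (J.InductivePower β) = J.InductivePower (β + α) :=
  le_antisymm (J.idealProd_inductivePower_le hpost hpre α β) (J.inductivePower_add_le_idealProd α β)

/-- For an ideal `J` of morphisms of an additive category in which the relevant colimits
exist, and any two ordinals `α` and `β`, the product ideal `J^{(α)} · J^{(β)}` equals the
`(β + α)`-th inductive power `J^{(β+α)}`. -/
theorem stmt8 {C : Type u} [Category.{v} C] [Preadditive C]
    [HasColimitsOfSize.{w, w} C]
    (J : MorphismProperty C)
    (hadd : ∀ ⦃X Y : C⦄ (f g : X ⟶ Y), J f → J g → J (f + g))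
    (hpost : ∀ ⦃X Y Z : C⦄ (f : X ⟶ Y) (g : Y ⟶ Z), J f → J (f ≫ g))
    (hpre : ∀ ⦃X Y Z : C⦄ (f : X ⟶ Y) (g : Y ⟶ Z), J g → J (f ≫ g))
    (α β : Ordinal.{w}) :
    (J.InductivePower α).IdealProd (J.InductivePower β) = J.InductivePower (β + α) :=
  stmt8_general J hpost hpre α β
end

section
/- Let J be an idempotent ideal (J = J∘J) of morphisms in a cocomplete additive category such that every countable chain of morphisms in J has a colimit. Then J equals its ω-th inductive power: J = J^{(ω)}. -/
open CategoryTheory Limits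

universe w v u

/-!
`J^{(ω)} ⊆ J`: the composite `A 0 ⟶ A ω` of an inductive system factors through its
first step `A 0 ⟶ A 1`, which lies in `J`.

`J ⊆ J^{(ω)}`: by idempotence, `g ∈ J` factors as `g = j₀ ≫ g₁` with `j₀, g₁ ∈ J`,
then `g₁ = j₁ ≫ g₂`, and so on. The maps `gₙ` form a cocone over the chain of the `jₙ`,
so `g` factors through the colimit map of that chain. To index the chain and its colimit
by ordinals, extend it to `WithTop ℕ` (with the colimit at `⊤`) and pull it back along
`α ↦ card α`, which is the identity below `ω` and sends everything else to `⊤`.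
-/

namespace Ordinal

noncomputable def toWithTopNat (α : Ordinal.{w}) : WithTop ℕ := Cardinal.toENat α.card

lemma toWithTopNat_monotone : Monotone toWithTopNat.{w} :=
  fun _ _ h => Cardinal.toENat.monotone' (card_le_card h)

@[simp]
lemma toWithTopNat_natCast (n : ℕ) : toWithTopNat.{w} n = n := by
  rw [toWithTopNat, card_nat, map_natCast]
  rfl

@[simp]
lemma toWithTopNat_omega0 : toWithTopNat.{w} ω = ⊤ := by
  rw [toWithTopNat, card_omega0]
  exact (Cardinal.toENat_eq_top.2 le_rfl : Cardinal.toENat _ = (⊤ : ℕ∞))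

end Ordinal

namespace CategoryTheory

variable {C : Type u} [Category.{v} C]

lemma Functor.map_comp_map_eq_of_isThin {D : Type*} [Category D] [Quiver.IsThin D] (H : D ⥤ C)
    {x y y' z : D} (f : x ⟶ y) (g : y ⟶ z) (f' : x ⟶ y') (g' : y' ⟶ z) :
    H.map f ≫ H.map g = H.map f' ≫ H.map g' := by
  rw [← H.map_comp, ← H.map_comp, Subsingleton.elim (f ≫ g) (f' ≫ g')]

namespace Limits

namespace Cocone

variable {K : Type*} [Preorder K] {F : K ⥤ C} (c : Cocone F)

def withTopObj : WithTop K → C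
  | (a : K) => F.obj a
  | ⊤ => c.pt

def withTopMap : ∀ x y : WithTop K, x ≤ y → (c.withTopObj x ⟶ c.withTopObj y)
  | (a : K), (b : K), h => F.map (homOfLE (WithTop.coe_le_coe.1 h))
  | (a : K), ⊤, _ => c.ι.app a
  | ⊤, ⊤, _ => 𝟙 _
  | ⊤, (b : K), h => (WithTop.not_top_le_coe b h).elim

def withTopFunctor : WithTop K ⥤ C where
  obj := c.withTopObj
  map {x y} φ := c.withTopMap x y (leOfHom φ)
  map_id x := by cases x <;> simp [withTopMap, withTopObj]
  map_comp {x y z} φ ψ := by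
    have hxy := leOfHom φ
    have hyz := leOfHom ψ
    cases x <;> cases y <;> cases z <;> simp_all [withTopMap, withTopObj, ← F.map_comp]

lemma withTopFunctor_map_coe {a b : K} (h : a ≤ b) :
    c.withTopFunctor.map (homOfLE (WithTop.coe_le_coe.2 h)) = F.map (homOfLE h) := rfl

end Cocone

@[simps]
def _root_.WithTop.coeCocone (K : Type*) [Preorder K] :
    Cocone (WithTop.coe_mono.functor : K ⥤ WithTop K) where
  pt := ⊤
  ι := { app := fun _ => homOfLE le_top }

open Ordinal in
theorem IsColimit.nonempty_isColimit_principalSegIio_omega0 {H : WithTop ℕ ⥤ C}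
    (hH : IsColimit (H.mapCocone (WithTop.coeCocone ℕ))) :
    Nonempty (IsColimit
      ((Set.principalSegIio ω).cocone (toWithTopNat_monotone.{w}.functor ⋙ H))) := by
  let E : ℕ ⥤ Set.Iio (ω : Ordinal.{w}) :=
    (show Monotone fun n : ℕ => (⟨n, natCast_lt_omega0 n⟩ : Set.Iio (ω : Ordinal.{w})) from
      fun _ _ h => Subtype.mk_le_mk.2 (Nat.cast_le.2 h)).functor
  have : E.Final := (Monotone.final_functor_iff _).2 fun ⟨α, hα⟩ => by
    obtain ⟨n, rfl⟩ := lt_omega0.1 hα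
    exact ⟨n, le_rfl⟩
  let φ : WithTop.coe_mono.functor ⋙ H ≅ E ⋙ (Set.principalSegIio ω).monotone.functor ⋙
      toWithTopNat_monotone.{w}.functor ⋙ H :=
    NatIso.ofComponents (fun n => H.mapIso (eqToIso (toWithTopNat_natCast n).symm))
      (fun _ => H.map_comp_map_eq_of_isThin _ _ _ _)
  refine ⟨(Functor.Final.isColimitWhiskerEquiv E _).1 ((IsColimit.precomposeHomEquiv φ _).1
    (hH.ofIsoColimit (Cocone.ext (H.mapIso (eqToIso toWithTopNat_omega0.{w}.symm)) fun n => ?_)))⟩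
  exact H.map_comp_map_eq_of_isThin _ _ _ _

end Limits

namespace MorphismProperty

variable {J : MorphismProperty C}

theorem inductivePower_le
    (hpost : ∀ ⦃X Y Z : C⦄ (f : X ⟶ Y) (g : Y ⟶ Z), J f → J (f ≫ g))
    (hpre : ∀ ⦃X Y Z : C⦄ (f : X ⟶ Y) (g : Y ⟶ Z), J g → J (f ≫ g))
    {lam : Ordinal.{w}} (hlam : 0 < lam) : J.InductivePower lam ≤ J := by
  rintro X Y _ ⟨A, a, -, hcomp, hsucc, -, e, h, rfl⟩
  rw [← hcomp 0 (0 + 1) lam le_self_add (Order.add_one_le_of_lt hlam), Category.assoc]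
  exact hpre _ _ (hpost _ _ (hsucc 0 hlam))

theorem inductivePower_of_functor {lam : Ordinal.{w}} (G : Ordinal.{w} ⥤ C)
    (hsucc : ∀ α < lam, J (G.map (homOfLE (le_self_add : α ≤ α + 1))))
    (hlim : ∀ β ≤ lam, Order.IsSuccLimit β →
      Nonempty (IsColimit ((Set.principalSegIio β).cocone G)))
    {X Y : C} (e : X ≅ G.obj 0) (h : G.obj lam ⟶ Y) :
    J.InductivePower lam (e.hom ≫ G.map (homOfLE (zero_le (a := lam))) ≫ h) := by
  refine ⟨G.obj, fun α β h => G.map (homOfLE h), fun α => G.map_id α,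
    fun α β γ h₁ h₂ => (G.map_comp _ _).symm, hsucc, ?_, e, h, rfl⟩
  intro β hβ hβlim W c hc
  obtain ⟨hcolim⟩ := hlim β hβ hβlim
  let s : Cocone ((Set.principalSegIio β).monotone.functor ⋙ G) :=
    ⟨W, { app := fun α => c α.1 α.2
          naturality := fun α α' φ =>
            (hc α.1 α'.1 (leOfHom φ) α'.2).trans (Category.comp_id _).symm }⟩
  have := hcolim.existsUnique s
  simp only [Subtype.forall] at this
  exact this

open Ordinal in
theorem inductivePower_omega0_of_isColimit {H : WithTop ℕ ⥤ C}
    (hsucc : ∀ n : ℕ, J (H.map (homOfLE (WithTop.coe_le_coe.2 (n.le_add_right 1)))))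
    (hH : IsColimit (H.mapCocone (WithTop.coeCocone ℕ)))
    {X Y : C} (e : X ≅ H.obj (0 : ℕ)) (h : H.obj ⊤ ⟶ Y) :
    J.InductivePower ω (e.hom ≫ H.map (homOfLE le_top) ≫ h) := by
  have := inductivePower_of_functor (J := J) (toWithTopNat_monotone.functor ⋙ H) ?succ ?lim
    (e ≪≫ H.mapIso (eqToIso (toWithTopNat_natCast 0).symm))
    (H.map (eqToHom toWithTopNat_omega0) ≫ h)
  · convert this using 1
    simp only [Iso.trans_hom, Functor.mapIso_hom, Functor.comp_map, Category.assoc]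
    rw [← H.map_comp_assoc, ← H.map_comp_assoc]
    rfl
  case succ =>
    intro α hα
    obtain ⟨n, rfl⟩ := lt_omega0.1 hα
    -- `toWithTopNat n = n` only holds propositionally, so free the endpoints before substituting.
    have key : ∀ {x y : WithTop ℕ} (hxy : x ≤ y), x = n → y = ↑(n + 1) →
        J (H.map (homOfLE hxy)) := by
      rintro _ _ _ rfl rfl
      exact hsucc n
    exact key _ (toWithTopNat_natCast n) (by simpa using toWithTopNat_natCast (n + 1))
  case lim =>
    intro β hβ hβlim
    obtain rfl := le_antisymm hβ (omega0_le_of_isSuccLimit hβlim)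
    exact hH.nonempty_isColimit_principalSegIio_omega0

theorem exists_chain_of_idealProd_self_eq (hidem : J.IdealProd J = J) {X Y : C} {g : X ⟶ Y}
    (hg : J g) :
    ∃ (B : ℕ → C) (f : ∀ n, B n ⟶ B (n + 1))
      (k : Functor.ofSequence f ⟶ (Functor.const ℕ).obj Y)
      (e : X ≅ B 0), (∀ n, J (f n)) ∧ g = e.hom ≫ k.app 0 := by
  have step : ∀ p : Σ Z : C, {k : Z ⟶ Y // J k}, ∃ (q : Σ Z : C, {k : Z ⟶ Y // J k})
      (j : p.1 ⟶ q.1), J j ∧ j ≫ q.2.1 = p.2.1 := by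
    rintro ⟨Z, k, hk⟩
    obtain ⟨M, j, i, hj, hi, rfl⟩ : J.IdealProd J k := by rwa [hidem]
    exact ⟨⟨M, i, hi⟩, j, hj, rfl⟩
  choose next j hj hjk using step
  let p : ℕ → Σ Z : C, {k : Z ⟶ Y // J k} :=
    fun n => Nat.rec ⟨X, g, hg⟩ (fun _ q => next q) n
  exact ⟨fun n => (p n).1, fun n => j (p n),
    NatTrans.ofSequence (fun n => (p n).2.1) (fun n => by
      rw [Functor.ofSequence_map_homOfLE_succ]
      exact (hjk (p n)).trans (Category.comp_id _).symm),
    Iso.refl X, fun n => hj (p n), (Category.id_comp g).symm⟩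

end MorphismProperty

end CategoryTheory

theorem stmt9_general {C : Type u} [Category.{v} C]
    (J : MorphismProperty C)
    (hpost : ∀ ⦃X Y Z : C⦄ (f : X ⟶ Y) (g : Y ⟶ Z), J f → J (f ≫ g))
    (hpre : ∀ ⦃X Y Z : C⦄ (f : X ⟶ Y) (g : Y ⟶ Z), J g → J (f ≫ g))
    (hidem : J.IdealProd J = J)
    (hchain : ∀ (X : ℕ → C) (f : ∀ n, X n ⟶ X (n + 1)),
      (∀ n, J (f n)) → HasColimit (Functor.ofSequence f)) :
    J = J.InductivePower Ordinal.omega0.{w} := by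
  refine le_antisymm (fun X Y g hg => ?_)
    (MorphismProperty.inductivePower_le hpost hpre Ordinal.omega0_pos)
  obtain ⟨B, f, k, e, hf, rfl⟩ := MorphismProperty.exists_chain_of_idealProd_self_eq hidem hg
  have := hchain B f hf
  rw [← colimit.ι_desc ⟨Y, k⟩ 0]
  refine MorphismProperty.inductivePower_omega0_of_isColimit
    (H := (colimit.cocone (Functor.ofSequence f)).withTopFunctor)
    (fun n => ?_) (colimit.isColimit (Functor.ofSequence f)) e _
  rw [Cocone.withTopFunctor_map_coe _ (n.le_add_right 1), Functor.ofSequence_map_homOfLE_succ]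
  exact hf n

/-- An idempotent ideal `J = J ∘ J` of morphisms of a cocomplete additive category, such
that every countable chain of morphisms in `J` has a colimit, equals its `ω`-th inductive
power: `J = J^{(ω)}`. -/
theorem stmt9 {C : Type u} [Category.{v} C] [Preadditive C] [HasColimits C]
    (J : MorphismProperty C)
    (hadd : ∀ ⦃X Y : C⦄ (f g : X ⟶ Y), J f → J g → J (f + g))
    (hpost : ∀ ⦃X Y Z : C⦄ (f : X ⟶ Y) (g : Y ⟶ Z), J f → J (f ≫ g))
    (hpre : ∀ ⦃X Y Z : C⦄ (f : X ⟶ Y) (g : Y ⟶ Z), J g → J (f ≫ g))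
    (hidem : J.IdealProd J = J)
    (hchain : ∀ (X : ℕ → C) (f : ∀ n, X n ⟶ X (n + 1)),
      (∀ n, J (f n)) → HasColimit (Functor.ofSequence f)) :
    J = J.InductivePower Ordinal.omega0.{w} :=
  stmt9_general J hpost hpre hidem hchain
end

section
/- Let R be a ring and f : X → Y a ghost morphism of chain complexes of left R-modules (Hₙ(f) = 0 for all n). Then the pullback of the short exact sequence 0 → Σ⁻¹Y → cone(1_{Σ⁻¹Y}) → Y → 0 along f is a Cartan–Eilenberg exact sequence, i.e., it induces short exact sequences on cycles in every degree. -/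
open CategoryTheory Limits

universe u

namespace Stmt13

variable {R : Type u} [Ring R]

/-- The shift `Σ⁻¹Y` of a chain complex: `(Σ⁻¹Y)ₙ = Yₙ₊₁`, with negated differential. -/
def shiftNeg (Y : ChainComplex (ModuleCat.{u} R) ℤ) : ChainComplex (ModuleCat.{u} R) ℤ where
  X i := Y.X (i + 1)
  d i j := -Y.d (i + 1) (j + 1)
  shape := by
    intro i j hij
    try dsimp only
    rw [Y.shape, neg_zero]
    simp only [ComplexShape.down_Rel] at hij ⊢
    omega
  d_comp_d' := by intros; simp

/-- The cone of the identity of `Σ⁻¹Y`: the contractible complex with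
`cone(1_{Σ⁻¹Y})ₙ = Yₙ ⊕ Yₙ₊₁`, fitting in the degreewise split exact sequence
`0 → Σ⁻¹Y → cone(1_{Σ⁻¹Y}) → Y → 0`. -/
noncomputable def coneId (Y : ChainComplex (ModuleCat.{u} R) ℤ) :
    ChainComplex (ModuleCat.{u} R) ℤ where
  X i := Y.X i ⊞ Y.X (i + 1)
  d i j :=
    if hij : j + 1 = i then
      biprod.desc (biprod.lift (Y.d i j) (eqToHom (congrArg Y.X hij).symm))
        (biprod.lift 0 (-Y.d (i + 1) (j + 1)))
    else 0
  shape := by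
    intro i j hij
    simp only [ComplexShape.down_Rel] at hij
    try dsimp only
    rw [dif_neg hij]
  d_comp_d' := by
    intro i j k hij hjk
    simp only [ComplexShape.down_Rel] at hij hjk
    subst hij
    subst hjk
    try dsimp only
    rw [dif_pos rfl, dif_pos rfl]
    apply biprod.hom_ext' <;> apply biprod.hom_ext <;> simp

/-- The inclusion `Σ⁻¹Y → cone(1_{Σ⁻¹Y})`. -/
noncomputable def coneInl (Y : ChainComplex (ModuleCat.{u} R) ℤ) : shiftNeg Y ⟶ coneId Y where
  f i := biprod.inr
  comm' := by
    intro i j hij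
    simp only [ComplexShape.down_Rel] at hij
    subst hij
    dsimp only [coneId, shiftNeg]
    rw [dif_pos rfl]
    apply biprod.hom_ext <;> simp

/-- The projection `cone(1_{Σ⁻¹Y}) → Y`. -/
noncomputable def coneProj (Y : ChainComplex (ModuleCat.{u} R) ℤ) : coneId Y ⟶ Y where
  f i := biprod.fst
  comm' := by
    intro i j hij
    simp only [ComplexShape.down_Rel] at hij
    subst hij
    dsimp only [coneId]
    rw [dif_pos rfl]
    apply biprod.hom_ext' <;> simp

end Stmt13

open Stmt13

/-!
Pulling the degreewise split sequence `0 → Σ⁻¹Y → cone(1) → Y → 0` back along `f` gives a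
degreewise short exact sequence `0 → Σ⁻¹Y → P → X → 0` whose connecting map out of `H(X)`
factors through `H(f) = 0`. Cycles are left exact, and `Zₙ(P) → Zₙ(X)` is onto once the
connecting map vanishes: the differential of a lift of a cycle lies in `Σ⁻¹Y`, where it is
then a boundary `d y`, and subtracting `y` yields a cycle.
-/

namespace CategoryTheory.ShortComplex.ShortExact

variable {C : Type*} [Category C] [Abelian C]

lemma pullback {S : ShortComplex C} (hS : S.ShortExact) {X : C} (f : X ⟶ S.X₃)
    (k : S.X₁ ⟶ Limits.pullback S.g f) (hk₁ : k ≫ pullback.fst S.g f = S.f)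
    (hk₂ : k ≫ pullback.snd S.g f = 0) :
    (ShortComplex.mk k (pullback.snd S.g f) hk₂).ShortExact where
  mono_f := by
    have := hS.mono_f
    exact mono_of_mono_fac hk₁
  epi_g := by
    have := hS.epi_g
    infer_instance
  exact := by
    rw [ShortComplex.exact_iff_exact_up_to_refinements]
    intro A x (hx : x ≫ pullback.snd S.g f = 0)
    obtain ⟨A', π, hπ, y, hy⟩ := hS.exact.exact_up_to_refinements (x ≫ pullback.fst _ _)
      (by simp only [Category.assoc, pullback.condition, reassoc_of% hx, zero_comp])
    refine ⟨A', π, hπ, y, pullback.hom_ext ?_ ?_⟩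
    · simpa [hk₁] using hy
    · simp [hk₂, hx]

variable {ι : Type*} {c : ComplexShape ι}

lemma δ_pullback {S : ShortComplex (HomologicalComplex C c)} (hS : S.ShortExact)
    {X : HomologicalComplex C c} (f : X ⟶ S.X₃)
    (k : S.X₁ ⟶ Limits.pullback S.g f) (hk₁ : k ≫ pullback.fst S.g f = S.f)
    (hk₂ : k ≫ pullback.snd S.g f = 0) (i j : ι) (hij : c.Rel i j) :
    (hS.pullback f k hk₁ hk₂).δ i j hij = HomologicalComplex.homologyMap f i ≫ hS.δ i j hij := by
  let φ : ShortComplex.mk k (pullback.snd S.g f) hk₂ ⟶ S :=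
    { τ₁ := 𝟙 _, τ₂ := pullback.fst S.g f, τ₃ := f
      comm₁₂ := by simp [hk₁]
      comm₂₃ := pullback.condition }
  simpa [φ] using
    HomologicalComplex.HomologySequence.δ_naturality φ (hS.pullback f k hk₁ hk₂) hS i j hij

lemma epi_cyclesMap_g_of_δ_eq_zero {S : ShortComplex (HomologicalComplex C c)}
    (hS : S.ShortExact) (i j : ι) (hij : c.Rel i j) (hδ : hS.δ i j hij = 0) :
    Epi (HomologicalComplex.cyclesMap S.g i) := by
  have := hS.epi_g
  rw [epi_iff_surjective_up_to_refinements]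
  intro A z₃
  obtain ⟨A₁, π₁, hπ₁, x₂, hx₂⟩ :=
    surjective_up_to_refinements_of_epi (S.g.f i) (z₃ ≫ S.X₃.iCycles i)
  have hd : (x₂ ≫ S.X₂.d i j) ≫ S.g.f j = 0 := by
    rw [Category.assoc, ← S.g.comm, ← Category.assoc, ← hx₂]
    simp
  obtain ⟨A₂, π₂, hπ₂, (x₁ : A₂ ⟶ S.X₁.X j),
      (hx₁ : π₂ ≫ x₂ ≫ S.X₂.d i j = x₁ ≫ S.f.f j)⟩ :=
    (hS.map_of_exact (HomologicalComplex.eval C c j)).exact.exact_up_to_refinements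
      (x₂ ≫ S.X₂.d i j) hd
  -- `x₁` represents `δ` of the class of `z₃`, so it is a boundary `d y`.
  have hbd := hS.δ_eq i j hij (π₂ ≫ π₁ ≫ z₃ ≫ S.X₃.iCycles i) (by simp) (π₂ ≫ x₂)
    (by simp [hx₂]) x₁ (by rw [Category.assoc, hx₁]) _ rfl
  simp only [hδ, comp_zero] at hbd
  rw [eq_comm, S.X₁.liftCycles_comp_homologyπ_eq_zero_iff_up_to_refinements i j _
    (c.prev_eq' hij)] at hbd
  obtain ⟨A₃, π₃, hπ₃, y, hy⟩ := hbd
  refine ⟨A₃, π₃ ≫ π₂ ≫ π₁, epi_comp _ _,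
    S.X₂.liftCycles (π₃ ≫ π₂ ≫ x₂ - y ≫ S.f.f i) j (c.next_eq' hij) ?_, ?_⟩
  · rw [Preadditive.sub_comp, Category.assoc, Category.assoc, hx₁, Category.assoc, S.f.comm,
      ← reassoc_of% hy, sub_self]
  · rw [← cancel_mono (S.X₃.iCycles i)]
    simp [hx₂, ← HomologicalComplex.comp_f]

lemma cycles_shortExact_of_δ_eq_zero {S : ShortComplex (HomologicalComplex C c)}
    (hS : S.ShortExact) (i j : ι) (hij : c.Rel i j) (hδ : hS.δ i j hij = 0) :
    (ShortComplex.mk (HomologicalComplex.cyclesMap S.f i) (HomologicalComplex.cyclesMap S.g i)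
      (by rw [← HomologicalComplex.cyclesMap_comp, S.zero,
        HomologicalComplex.cyclesMap_zero])).ShortExact :=
  have := hS.mono_f
  { exact := HomologicalComplex.cycles_left_exact S hS.exact i
    epi_g := hS.epi_cyclesMap_g_of_δ_eq_zero i j hij hδ }

lemma cycles_pullback_shortExact_of_homologyMap_eq_zero
    {S : ShortComplex (HomologicalComplex C c)} (hS : S.ShortExact) {X : HomologicalComplex C c}
    (f : X ⟶ S.X₃)
    (k : S.X₁ ⟶ Limits.pullback S.g f) (hk₁ : k ≫ pullback.fst S.g f = S.f)
    (hk₂ : k ≫ pullback.snd S.g f = 0) (i j : ι) (hij : c.Rel i j)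
    (hf : HomologicalComplex.homologyMap f i = 0) :
    (ShortComplex.mk (HomologicalComplex.cyclesMap k i)
      (HomologicalComplex.cyclesMap (pullback.snd S.g f) i)
      (by rw [← HomologicalComplex.cyclesMap_comp, hk₂,
        HomologicalComplex.cyclesMap_zero])).ShortExact :=
  (hS.pullback f k hk₁ hk₂).cycles_shortExact_of_δ_eq_zero i j hij
    (by rw [hS.δ_pullback f k hk₁ hk₂, hf, zero_comp])

end CategoryTheory.ShortComplex.ShortExact

namespace Stmt13

variable {R : Type u} [Ring R]

lemma coneInl_comp_coneProj (Y : ChainComplex (ModuleCat.{u} R) ℤ) :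
    coneInl Y ≫ coneProj Y = 0 := by
  ext n : 1
  exact biprod.inr_fst

lemma shortExact_coneInl_coneProj (Y : ChainComplex (ModuleCat.{u} R) ℤ) :
    (ShortComplex.mk _ _ (coneInl_comp_coneProj Y)).ShortExact :=
  HomologicalComplex.shortExact_of_degreewise_shortExact _ fun n =>
    ShortComplex.Splitting.shortExact (S := ShortComplex.mk (biprod.inr : Y.X (n + 1) ⟶ _)
        (biprod.fst : Y.X n ⊞ Y.X (n + 1) ⟶ _) biprod.inr_fst)
      { r := biprod.snd
        s := biprod.inl
        id := (add_comm _ _).trans biprod.total }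

end Stmt13

/-- If `f : X ⟶ Y` is a ghost morphism of chain complexes of left `R`-modules
(`Hₙ(f) = 0` for all `n`), then the pullback of the short exact sequence
`0 → Σ⁻¹Y → cone(1_{Σ⁻¹Y}) → Y → 0` along `f` is Cartan–Eilenberg exact, i.e. it induces
short exact sequences on cycles in every degree. -/
theorem stmt13 {R : Type u} [Ring R]
    (X Y : ChainComplex (ModuleCat.{u} R) ℤ) (f : X ⟶ Y)
    (hf : ∀ n : ℤ, HomologicalComplex.homologyMap f n = 0)
    (k : shiftNeg Y ⟶ pullback (coneProj Y) f)
    (hk₁ : k ≫ pullback.fst (coneProj Y) f = coneInl Y)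
    (hk₂ : k ≫ pullback.snd (coneProj Y) f = 0) :
    ∀ n : ℤ,
      (ShortComplex.mk (HomologicalComplex.cyclesMap k n)
        (HomologicalComplex.cyclesMap (pullback.snd (coneProj Y) f) n)
        (by rw [← HomologicalComplex.cyclesMap_comp, hk₂,
          HomologicalComplex.cyclesMap_zero])).ShortExact := fun n =>
  (shortExact_coneInl_coneProj Y).cycles_pullback_shortExact_of_homologyMap_eq_zero
    f k hk₁ hk₂ n (n - 1) (by simp) (hf n)
end

section
/- Let R be a ring such that every chain-homotopy class of chain maps between complexes of left R-modules that induces zero on all homology groups is zero (i.e., the ghost ideal in the homotopy category K(R) vanishes). Then every left R-module is projective, i.e., R is semisimple. -/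
/-!
For a monomorphism `φ : A ⟶ B`, let `K` be the two-term complex `A --φ--> B` in degrees `1, 0`.
The projection of `K` onto `A[1]` (the identity in degree 1) is a ghost: `H₁(K) = ker φ = 0`, and
`A[1]` has no homology outside degree 1. A null-homotopy `s` of it satisfies `𝟙 = s₀ ∘ φ` in
degree 1, so `φ` splits. Hence every submodule of every `R`-module is a direct summand: `R` is
semisimple, and then every module is projective.
-/

open CategoryTheory Limits HomologicalComplex

universe u

namespace ChainComplex

variable {C : Type*} [Category C] [Preadditive C] [HasZeroObject C] {A B : C}

noncomputable abbrev twoTerm (φ : A ⟶ B) : ChainComplex C ℤ :=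
  double φ (show (ComplexShape.down ℤ).Rel 1 0 by simp)

noncomputable def twoTermToSingle (φ : A ⟶ B) :
    twoTerm φ ⟶ (single C (ComplexShape.down ℤ) 1).obj A :=
  mkHomFromDouble _ (by decide) (singleObjXSelf _ 1 A).inv 0 (by simp) (by simp)

lemma homologyMap_twoTermToSingle [CategoryWithHomology C] (φ : A ⟶ B) [Mono φ] (n : ℤ) :
    homologyMap (twoTermToSingle φ) n = 0 := by
  by_cases hn : n = 1
  · subst hn
    refine IsZero.eq_of_src ?_ _ _
    rw [← exactAt_iff_isZero_homology, exactAt_iff' _ 2 1 0 (by simp) (by simp),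
      ShortComplex.exact_iff_mono _ (double_d_eq_zero₀ _ _ 2 1 (by decide) : (twoTerm φ).d 2 1 = 0)]
    change Mono ((twoTerm φ).d 1 0)
    rw [double_d _ _ (show (1 : ℤ) ≠ 0 by decide)]
    infer_instance
  · exact (isZero_single_obj_homology _ 1 A n hn).eq_of_tgt _ _

lemma isSplitMono_of_homotopy_twoTermToSingle (φ : A ⟶ B)
    (H : Homotopy (twoTermToSingle φ) 0) : IsSplitMono φ := by
  have hc := H.comm 1
  rw [dNext_eq H.hom (show (ComplexShape.down ℤ).Rel 1 0 by simp),
    prevD_eq H.hom (show (ComplexShape.down ℤ).Rel 2 1 by simp)] at hc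
  simp only [twoTermToSingle, mkHomFromDouble_f₀, double_d _ _ (show (1 : ℤ) ≠ 0 by decide),
    Category.assoc, single_obj_d, comp_zero, add_zero, zero_f, Iso.cancel_iso_hom_left] at hc
  exact ⟨⟨(doubleXIso₁ φ _ _).inv ≫ H.hom 0 1 ≫ (singleObjXSelf _ 1 A).hom, by
    simpa using hc.symm =≫ (singleObjXSelf _ 1 A).hom⟩⟩

theorem isSplitMono_of_ghost_nullHomotopic [CategoryWithHomology C]
    (h : ∀ (X Y : ChainComplex C ℤ) (f : X ⟶ Y),
      (∀ n : ℤ, homologyMap f n = 0) → Nonempty (Homotopy f 0))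
    (φ : A ⟶ B) [Mono φ] : IsSplitMono φ :=
  let ⟨H⟩ := h _ _ _ (homologyMap_twoTermToSingle φ)
  isSplitMono_of_homotopy_twoTermToSingle φ H

end ChainComplex

theorem ModuleCat.isSemisimpleModule_of_forall_isSplitMono {R : Type u} [Ring R]
    (h : ∀ (A B : ModuleCat.{u} R) (φ : A ⟶ B) [Mono φ], IsSplitMono φ)
    (M : Type u) [AddCommGroup M] [Module R M] : IsSemisimpleModule R M := by
  refine { exists_isCompl := fun N ↦ ?_ }
  have : Mono (ModuleCat.ofHom N.subtype) :=
    (ModuleCat.mono_iff_injective _).mpr N.injective_subtype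
  have hr := IsSplitMono.id (ModuleCat.ofHom N.subtype)
  exact ⟨_, LinearMap.isCompl_of_proj (f := (retraction (ModuleCat.ofHom N.subtype)).hom)
    fun x ↦ congr($(hr).hom x)⟩

/-- If every ghost chain map between chain complexes of left `R`-modules (i.e. every
chain map inducing zero on all homology groups) is null-homotopic — that is, the ghost
ideal in the homotopy category `K(R)` vanishes — then every left `R`-module is
projective, i.e. `R` is semisimple. -/
theorem stmt14 {R : Type u} [Ring R]
    (h : ∀ (X Y : ChainComplex (ModuleCat.{u} R) ℤ) (f : X ⟶ Y),
      (∀ n : ℤ, HomologicalComplex.homologyMap f n = 0) → Nonempty (Homotopy f 0)) :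
    (∀ (M : Type u) [AddCommGroup M] [Module R M], Module.Projective R M) ∧
      IsSemisimpleRing R := by
  have : IsSemisimpleRing R :=
    ModuleCat.isSemisimpleModule_of_forall_isSplitMono
      (fun _ _ φ _ ↦ ChainComplex.isSplitMono_of_ghost_nullHomotopic h φ) R
  exact ⟨fun M _ _ ↦ Module.projective_of_isSemisimpleRing R M, this⟩
end

section
/- Let A be a cocomplete abelian category with exact coproducts, S a set of objects of A, and A an object of A. Let S = ⨁_{T ∈ S} T, let I = Ext¹(S, A), and for each i ∈ I choose a representing short exact sequence 0 → A → B_i → S → 0. Form the pushout of the coproduct sequence 0 → A^{(I)} → ⨁_{i∈I} B_i → S^{(I)} → 0 along the codiagonal A^{(I)} → A, obtaining 0 → A →^{j} G → S^{(I)} → 0. Then j is an S-ghost: Ext¹(T, j) = 0 for every T ∈ S. -/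
/-!
Every class `e ∈ Ext¹(T, A)` is the restriction of a class `i ∈ Ext¹(S, A)`, since `T` is a
summand of `S`. The map `j` factors through the inflation `A ⟶ B i` of the sequence representing
`i`, and the pushforward of an extension class along its own inflation vanishes; hence
`e ∘ j = 0`.
-/

open CategoryTheory Limits CategoryTheory.Abelian

universe w v u

namespace CategoryTheory.Abelian.Ext

variable {C : Type u} [Category.{v} C] [Abelian C] [HasExt.{w} C]

lemma mk₀_comp_surjective_of_isSplitMono {X Y : C} (f : X ⟶ Y) [IsSplitMono f] (Z : C) (n : ℕ) :
    Function.Surjective fun x : Ext.{w} Y Z n => (mk₀ f).comp x (zero_add n) := fun e =>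
  ⟨(mk₀ (retraction f)).comp e (zero_add n), by
    dsimp only
    rw [mk₀_comp_mk₀_assoc, IsSplitMono.id, mk₀_id_comp]⟩

lemma comp_mk₀_comp_eq_zero {X Y Z W : C} {n : ℕ} {x : Ext.{w} X Y n} {f : Y ⟶ Z}
    (hx : x.comp (mk₀ f) (add_zero n) = 0) (g : Z ⟶ W) :
    x.comp (mk₀ (f ≫ g)) (add_zero n) = 0 := by
  rw [← mk₀_comp_mk₀, ← comp_assoc_of_third_deg_zero, hx, zero_comp]

end CategoryTheory.Abelian.Ext

lemma CategoryTheory.Limits.pushout_inl_sigmaDesc_id_sigmaMap {C : Type u} [Category.{v} C]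
    {ι : Type w} {A : C} {B : ι → C} (f : ∀ i, A ⟶ B i) [HasCoproduct fun _ : ι => A]
    [HasCoproduct B]
    [HasPushout (Sigma.desc fun _ : ι => 𝟙 A) (Sigma.map (f := fun _ : ι => A) f)] (i : ι) :
    pushout.inl (Sigma.desc fun _ : ι => 𝟙 A) (Sigma.map (f := fun _ : ι => A) f) =
      f i ≫ Sigma.ι B i ≫
        pushout.inr (Sigma.desc fun _ : ι => 𝟙 A) (Sigma.map (f := fun _ : ι => A) f) := by
  simpa using Sigma.ι (fun _ : ι => A) i ≫=
    pushout.condition (f := Sigma.desc fun _ : ι => 𝟙 A) (g := Sigma.map (f := fun _ : ι => A) f)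

theorem stmt19_general {C : Type u} [Category.{v} C] [Abelian C] [HasColimits C]
    [HasExt.{v} C]
    {𝒮 : Type v} (obj : 𝒮 → C) (A : C)
    (B : Ext.{v} (∐ obj) A 1 → C)
    (incl : ∀ i, A ⟶ B i) (proj : ∀ i, B i ⟶ ∐ obj)
    (w : ∀ i, incl i ≫ proj i = 0)
    (hses : ∀ i, (ShortComplex.mk (incl i) (proj i) (w i)).ShortExact)
    (hrep : ∀ i, (hses i).extClass = i) :
    ∀ (t : 𝒮) (e : Ext.{v} (obj t) A 1),
      e.comp (Ext.mk₀ (pushout.inl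
        (Limits.Sigma.desc (f := fun _ : Ext.{v} (∐ obj) A 1 => A) (fun _ => 𝟙 A))
        (Limits.Sigma.map (f := fun _ : Ext.{v} (∐ obj) A 1 => A) (g := B) incl))) (add_zero 1) = 0 := by
  intro t e
  obtain ⟨i, rfl⟩ := Ext.mk₀_comp_surjective_of_isSplitMono (Sigma.ι obj t) A 1 e
  have hi : i.comp (Ext.mk₀ (incl i)) (add_zero 1) = 0 := by
    simpa only [hrep i] using (hses i).extClass_comp
  rw [Ext.comp_assoc_of_third_deg_zero, pushout_inl_sigmaDesc_id_sigmaMap incl i,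
    Ext.comp_mk₀_comp_eq_zero hi, Ext.comp_zero]

/-- The Eklof–Trlifaj construction of a ghost preenvelope: let `A` be a cocomplete abelian
category with exact coproducts (AB4), `𝒮` a set of objects, `A` an object, `S = ⨁_{T ∈ 𝒮} T`
and `I = Ext¹(S, A)`.  Choose for each `i ∈ I` a representing short exact sequence
`0 → A → B i → S → 0` (i.e. with extension class `i`), and form the pushout of the
coproduct sequence `0 → A^{(I)} → ⨁ᵢ B i → S^{(I)} → 0` along the codiagonal
`A^{(I)} → A`; the resulting inflation `j = pushout.inl : A ⟶ G` is an `𝒮`-ghost: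
`Ext¹(T, j) = 0` for every `T ∈ 𝒮`. -/
theorem stmt19 {C : Type u} [Category.{v} C] [Abelian C] [HasColimits C]
    [AB4 C] [HasExt.{v} C]
    {𝒮 : Type v} (obj : 𝒮 → C) (A : C)
    (B : Ext.{v} (∐ obj) A 1 → C)
    (incl : ∀ i, A ⟶ B i) (proj : ∀ i, B i ⟶ ∐ obj)
    (w : ∀ i, incl i ≫ proj i = 0)
    (hses : ∀ i, (ShortComplex.mk (incl i) (proj i) (w i)).ShortExact)
    (hrep : ∀ i, (hses i).extClass = i) :
    ∀ (t : 𝒮) (e : Ext.{v} (obj t) A 1),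
      e.comp (Ext.mk₀ (pushout.inl
        (Limits.Sigma.desc (f := fun _ : Ext.{v} (∐ obj) A 1 => A) (fun _ => 𝟙 A))
        (Limits.Sigma.map (f := fun _ : Ext.{v} (∐ obj) A 1 => A) (g := B) incl))) (add_zero 1) = 0 :=
  stmt19_general obj A B incl proj w hses hrep
end
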